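/- There exists a constant C_d > 0, depending only on the dimension d, such that for every r > 0 and every β > 0 the Robin principal eigenvalue of the ball B_r satisfies λβ(B_r) ≤ C_d β / (r(1 + βr)). -/

import Mathlib

open MeasureTheory Metric Set
open scoped NNReal

noncomputable def robinEigenvalue (d : ℕ) (β : ℝ) (Ω : Set (EuclideanSpace ℝ (Fin d))) : ℝ :=
  sInf { t : ℝ | ∃ u : EuclideanSpace ℝ (Fin d) → ℝ, ContDiff ℝ 1 u ∧
    (0 < ∫ x in Ω, (u x) ^ 2) ∧
    t = ((∫ x in Ω, ‖fderiv ℝ u x‖ ^ 2) +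
          β * ∫ x in frontier Ω, (u x) ^ 2 ∂(μH[(d : ℝ) - 1])) / ∫ x in Ω, (u x) ^ 2 }

noncomputable def robinTorsion (d : ℕ) (β : ℝ) (Ω : Set (EuclideanSpace ℝ (Fin d))) : ℝ :=
  sSup { t : ℝ | ∃ u : EuclideanSpace ℝ (Fin d) → ℝ, ContDiff ℝ 1 u ∧
    (0 < (∫ x in Ω, ‖fderiv ℝ u x‖ ^ 2) +
          β * ∫ x in frontier Ω, (u x) ^ 2 ∂(μH[(d : ℝ) - 1])) ∧
    t = (∫ x in Ω, u x) ^ 2 /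
        ((∫ x in Ω, ‖fderiv ℝ u x‖ ^ 2) +
          β * ∫ x in frontier Ω, (u x) ^ 2 ∂(μH[(d : ℝ) - 1])) }

def HasLipschitzBoundary {d : ℕ} (Ω : Set (EuclideanSpace ℝ (Fin d))) : Prop :=
  ∃ hd : 0 < d, ∀ z ∈ frontier Ω, ∃ U : Set (EuclideanSpace ℝ (Fin d)),
    IsOpen U ∧ z ∈ U ∧
    ∃ (A : EuclideanSpace ℝ (Fin d) ≃ₗᵢ[ℝ] EuclideanSpace ℝ (Fin d))
      (x₀ : EuclideanSpace ℝ (Fin d)) (L : ℝ≥0)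
      (f : EuclideanSpace ℝ (Fin (d - 1)) → ℝ),
      LipschitzWith L f ∧
      Ω ∩ U = {x | f (WithLp.toLp 2 (fun j : Fin (d - 1) => A (x - x₀) (Fin.castLE (Nat.sub_le d 1) j))) <
                    A (x - x₀) ⟨d - 1, Nat.sub_lt hd Nat.one_pos⟩} ∩ U

/-! Two test functions suffice. The constant `1` has no Dirichlet energy, so
`λ ≤ β |∂B_r| / |B_r| = c₁ β / r`, which is sharp when `β r` is small. The function
`r² - |x|²` vanishes on `∂B_r`, so the boundary term drops out; its energy is at most
`4 r² |B_r|` and its mass at least `(3 r² / 4)² |B_{r/2}| = (3 r² / 4)² 2⁻ᵈ |B_r|`, whence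
`λ ≤ c₂ / r²` for every `β`. Splitting at `β r = 1`, the smaller of the two bounds is at most
`2 (c₁ + c₂) β / (r (1 + β r))`. -/

open scoped ENNReal Pointwise

section Rayleigh

variable {d : ℕ} {β : ℝ} {Ω : Set (EuclideanSpace ℝ (Fin d))}

theorem robinEigenvalue_le_of_contDiff (hβ : 0 ≤ β) {u : EuclideanSpace ℝ (Fin d) → ℝ}
    (hu : ContDiff ℝ 1 u) (hpos : 0 < ∫ x in Ω, u x ^ 2) :
    robinEigenvalue d β Ω ≤
      ((∫ x in Ω, ‖fderiv ℝ u x‖ ^ 2) +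
        β * ∫ x in frontier Ω, u x ^ 2 ∂μH[(d : ℝ) - 1]) / ∫ x in Ω, u x ^ 2 := by
  refine csInf_le ⟨0, ?_⟩ ⟨u, hu, hpos, rfl⟩
  rintro _ ⟨v, -, -, rfl⟩
  positivity

theorem robinEigenvalue_le_mul_frontier_div_volume (hβ : 0 ≤ β) (h₀ : volume Ω ≠ 0)
    (hfin : volume Ω ≠ ∞) :
    robinEigenvalue d β Ω ≤ β * μH[(d : ℝ) - 1].real (frontier Ω) / volume.real Ω := by
  have hvol : 0 < volume.real Ω := ENNReal.toReal_pos h₀ hfin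
  simpa using robinEigenvalue_le_of_contDiff (u := fun _ => (1 : ℝ)) hβ contDiff_const
    (by simpa using hvol)

end Rayleigh

theorem measureReal_ball_pos {X : Type*} [PseudoMetricSpace X] [ProperSpace X]
    [MeasurableSpace X] (μ : Measure X) [μ.IsOpenPosMeasure] [IsFiniteMeasureOnCompacts μ]
    (x : X) {r : ℝ} (hr : 0 < r) : 0 < μ.real (ball x r) :=
  ENNReal.toReal_pos (measure_ball_pos μ x hr).ne' measure_ball_lt_top.ne

theorem addHaar_real_ball_of_pos {E : Type*} [NormedAddCommGroup E] [NormedSpace ℝ E]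
    [MeasurableSpace E] [BorelSpace E] [FiniteDimensional ℝ E] (μ : Measure E)
    [μ.IsAddHaarMeasure] (x : E) {r : ℝ} (hr : 0 < r) :
    μ.real (ball x r) = r ^ Module.finrank ℝ E * μ.real (ball 0 1) := by
  rw [measureReal_def, Measure.addHaar_ball_of_pos μ x hr, ENNReal.toReal_mul,
    ENNReal.toReal_ofReal (by positivity), measureReal_def]

theorem hausdorffMeasure_real_sphere_zero {E : Type*} [NormedAddCommGroup E] [NormedSpace ℝ E]
    [MeasurableSpace E] [BorelSpace E] {s : ℝ} (hs : 0 ≤ s) {r : ℝ} (hr : 0 < r) :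
    μH[s].real (sphere (0 : E) r) = r ^ s * μH[s].real (sphere (0 : E) 1) := by
  have hsphere : sphere (0 : E) r = r • sphere (0 : E) 1 := by
    rw [smul_sphere' hr.ne', smul_zero, Real.norm_of_nonneg hr.le, mul_one]
  rw [hsphere, measureReal_def, Measure.hausdorffMeasure_smul₀ hs hr.ne', ENNReal.smul_def,
    smul_eq_mul, ENNReal.toReal_mul, ENNReal.coe_toReal, NNReal.coe_rpow, coe_nnnorm,
    Real.norm_of_nonneg hr.le, measureReal_def]

theorem norm_fderiv_const_sub_norm_sq {E : Type*} [NormedAddCommGroup E] [InnerProductSpace ℝ E]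
    (c : ℝ) (x : E) : ‖fderiv ℝ (fun y : E => c - ‖y‖ ^ 2) x‖ = 2 * ‖x‖ := by
  rw [fderiv_const_sub, norm_neg, fderiv_norm_sq_apply, ← Nat.cast_smul_eq_nsmul ℝ, norm_smul,
    innerSL_apply_norm]
  norm_num

section QuadraticTestFunction

variable {E : Type*} [NormedAddCommGroup E] [MeasurableSpace E] [ProperSpace E]
  (μ : Measure E) [IsFiniteMeasureOnCompacts μ] {r : ℝ}

theorem integral_norm_fderiv_sq_ball_le [InnerProductSpace ℝ E] :
    ∫ x in ball (0 : E) r, ‖fderiv ℝ (fun y : E => r ^ 2 - ‖y‖ ^ 2) x‖ ^ 2 ∂μ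
      ≤ 4 * r ^ 2 * μ.real (ball (0 : E) r) := by
  refine (Real.le_norm_self _).trans
    (norm_setIntegral_le_of_norm_le_const measure_ball_lt_top fun x hx => ?_)
  have hx : ‖x‖ < r := mem_ball_zero_iff.1 hx
  rw [norm_fderiv_const_sub_norm_sq, Real.norm_of_nonneg (by positivity)]
  nlinarith [norm_nonneg x]

theorem mul_measureReal_ball_half_le_integral_sq [BorelSpace E] (hr : 0 ≤ r) :
    (3 / 4 * r ^ 2) ^ 2 * μ.real (ball (0 : E) (r / 2))
      ≤ ∫ x in ball (0 : E) r, (r ^ 2 - ‖x‖ ^ 2) ^ 2 ∂μ := by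
  have hint : IntegrableOn (fun x : E => (r ^ 2 - ‖x‖ ^ 2) ^ 2) (ball 0 r) μ :=
    (by fun_prop : Continuous fun x : E => (r ^ 2 - ‖x‖ ^ 2) ^ 2).continuousOn
      |>.integrableOn_of_subset_isCompact (isCompact_closedBall 0 r) measurableSet_ball
        ball_subset_closedBall measure_ball_lt_top.ne
  have hsub : ball (0 : E) (r / 2) ⊆ ball 0 r := ball_subset_ball (by linarith)
  calc (3 / 4 * r ^ 2) ^ 2 * μ.real (ball (0 : E) (r / 2))
      ≤ ∫ x in ball (0 : E) (r / 2), (r ^ 2 - ‖x‖ ^ 2) ^ 2 ∂μ := by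
        refine setIntegral_ge_of_const_le_real measurableSet_ball measure_ball_lt_top.ne
          (fun x hx => ?_) (hint.mono_set hsub)
        have hx : ‖x‖ < r / 2 := mem_ball_zero_iff.1 hx
        have : 3 / 4 * r ^ 2 ≤ r ^ 2 - ‖x‖ ^ 2 := by nlinarith [norm_nonneg x]
        gcongr
    _ ≤ ∫ x in ball (0 : E) r, (r ^ 2 - ‖x‖ ^ 2) ^ 2 ∂μ :=
        setIntegral_mono_set hint (ae_of_all _ fun _ => sq_nonneg _) hsub.eventuallyLE

end QuadraticTestFunction

section Ball

variable {d : ℕ} {β r : ℝ}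

theorem robinEigenvalue_ball_le_mul_div (hd : 1 ≤ d) (hβ : 0 ≤ β) (hr : 0 < r) :
    robinEigenvalue d β (ball (0 : EuclideanSpace ℝ (Fin d)) r) ≤
      β * (μH[(d : ℝ) - 1].real (sphere (0 : EuclideanSpace ℝ (Fin d)) 1) /
        volume.real (ball (0 : EuclideanSpace ℝ (Fin d)) 1)) / r := by
  have hs : (0 : ℝ) ≤ d - 1 := sub_nonneg.2 (by exact_mod_cast hd)
  have hV : 0 < volume.real (ball (0 : EuclideanSpace ℝ (Fin d)) 1) :=
    measureReal_ball_pos volume 0 one_pos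
  refine (robinEigenvalue_le_mul_frontier_div_volume hβ (measure_ball_pos _ _ hr).ne'
    measure_ball_lt_top.ne).trans_eq ?_
  rw [frontier_ball 0 hr.ne', hausdorffMeasure_real_sphere_zero hs hr,
    addHaar_real_ball_of_pos volume 0 hr, finrank_euclideanSpace_fin, Real.rpow_sub_one hr.ne',
    Real.rpow_natCast]
  field_simp

theorem robinEigenvalue_ball_le_div_sq (hβ : 0 ≤ β) (hr : 0 < r) :
    robinEigenvalue d β (ball (0 : EuclideanSpace ℝ (Fin d)) r) ≤ 64 * 2 ^ d / (9 * r ^ 2) := by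
  set V := volume.real (ball (0 : EuclideanSpace ℝ (Fin d)) 1)
  have hV : 0 < V := measureReal_ball_pos volume 0 one_pos
  have hmass := mul_measureReal_ball_half_le_integral_sq (E := EuclideanSpace ℝ (Fin d))
    volume hr.le
  have henergy := integral_norm_fderiv_sq_ball_le (E := EuclideanSpace ℝ (Fin d)) volume (r := r)
  rw [addHaar_real_ball_of_pos volume 0 (half_pos hr), finrank_euclideanSpace_fin] at hmass
  rw [addHaar_real_ball_of_pos volume 0 hr, finrank_euclideanSpace_fin] at henergy
  have hmass_pos : 0 < ∫ x in ball (0 : EuclideanSpace ℝ (Fin d)) r, (r ^ 2 - ‖x‖ ^ 2) ^ 2 :=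
    lt_of_lt_of_le (by positivity) hmass
  have hfrontier : ∫ x in frontier (ball (0 : EuclideanSpace ℝ (Fin d)) r),
      (r ^ 2 - ‖x‖ ^ 2) ^ 2 ∂μH[(d : ℝ) - 1] = 0 := by
    rw [frontier_ball 0 hr.ne']
    exact setIntegral_eq_zero_of_forall_eq_zero fun x hx => by
      simp [mem_sphere_zero_iff_norm.1 hx]
  calc _ ≤ _ := robinEigenvalue_le_of_contDiff hβ (u := fun x => r ^ 2 - ‖x‖ ^ 2)
        (contDiff_const.sub (contDiff_norm_sq ℝ)) hmass_pos
    _ ≤ 4 * r ^ 2 * (r ^ d * V) / ((3 / 4 * r ^ 2) ^ 2 * ((r / 2) ^ d * V)) := by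
        rw [hfrontier, mul_zero, add_zero]
        exact div_le_div₀ (by positivity) henergy (by positivity) hmass
    _ = 64 * 2 ^ d / (9 * r ^ 2) := by
        rw [div_pow]
        field_simp
        ring

end Ball

theorem le_two_mul_add_mul_div_of_le_of_le {A B r β x : ℝ} (hA : 0 ≤ A) (hB : 0 ≤ B)
    (hr : 0 < r) (hβ : 0 < β) (h₁ : x ≤ β * A / r) (h₂ : x ≤ B / r ^ 2) :
    x ≤ 2 * (A + B) * β / (r * (1 + β * r)) := by
  rcases le_total (β * r) 1 with hβr | hβr
  · refine h₁.trans ?_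
    rw [div_le_div_iff₀ hr (by positivity)]
    nlinarith [mul_nonneg (mul_nonneg hβ.le hr.le) hB, mul_nonneg (mul_nonneg hβ.le hr.le) hA]
  · refine h₂.trans ?_
    rw [div_le_div_iff₀ (by positivity) (by positivity)]
    nlinarith [mul_nonneg (mul_nonneg hβ.le hr.le) hB, mul_nonneg (mul_nonneg hβ.le hr.le) hA]

theorem robin_eigenvalue_ball_upper_bound (d : ℕ) (hd : 2 ≤ d) :
    ∃ C : ℝ, 0 < C ∧ ∀ r β : ℝ, 0 < r → 0 < β →
      robinEigenvalue d β (ball (0 : EuclideanSpace ℝ (Fin d)) r) ≤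
        C * β / (r * (1 + β * r)) := by
  set A := μH[(d : ℝ) - 1].real (sphere (0 : EuclideanSpace ℝ (Fin d)) 1) /
    volume.real (ball (0 : EuclideanSpace ℝ (Fin d)) 1)
  have hA : 0 ≤ A := by positivity
  refine ⟨2 * (A + 64 * 2 ^ d / 9), by positivity, fun r β hr hβ => ?_⟩
  exact le_two_mul_add_mul_div_of_le_of_le hA (by positivity) hr hβ
    (robinEigenvalue_ball_le_mul_div (by omega) hβ.le hr)
    ((robinEigenvalue_ball_le_div_sq hβ.le hr).trans_eq (by ring))
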